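/- Let e be an execution over finite sets P of processes and Msg of messages, and let M = msc(e). Then e belongs to the peer-to-peer communication model p2p if and only if for any two send events s1, s2 of e both labelled with a send from a process p to a process q such that s1 ≺_M s2, one of the following holds: s2 is unmatched, or there exist receive events r1, r2 with r1 ≺_M r2, src(r1) = s1 and src(r2) = s2. -/

import Mathlib

/-! ## Common definitions: actions, executions, MSCs, communication models,
communicating finite state machines, and global types. -/

/-- Actions: a send `p▷q!m` or a receive `p▷q?m`. -/
inductive Act (P M : Type) : Type where
  | snd (p q : P) (m : M)
  | rcv (p q : P) (m : M)
deriving DecidableEq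

namespace Act
variable {P M : Type}

/-- The process executing an action: a send belongs to the sender,
a receive belongs to the receiver. -/
def proc : Act P M → P
  | .snd p _ _ => p
  | .rcv _ q _ => q

end Act

/-- Raw executions: a word of actions together with a source function on positions. -/
structure Exec (P M : Type) : Type where
  w : List (Act P M)
  src : ℕ → ℕ

namespace Exec
variable {P M : Type}

def act? (e : Exec P M) (i : ℕ) : Option (Act P M) := e.w[i]?

def IsSend (e : Exec P M) (i : ℕ) : Prop := ∃ p q m, e.act? i = some (.snd p q m)

def IsRecv (e : Exec P M) (i : ℕ) : Prop := ∃ p q m, e.act? i = some (.rcv p q m)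

/-- Well-formedness of an execution: each receive event `r` labelled `p▷q?m` has a
source send event `src r < r` labelled `p▷q!m`, and `src` is injective on receive events. -/
def WF (e : Exec P M) : Prop :=
  (∀ i p q m, e.act? i = some (.rcv p q m) →
    e.src i < i ∧ e.act? (e.src i) = some (.snd p q m)) ∧
  (∀ i j, e.IsRecv i → e.IsRecv j → e.src i = e.src j → i = j)

/-- A send event is matched if it is the source of some receive event. -/
def Matched (e : Exec P M) (s : ℕ) : Prop := ∃ r, e.IsRecv r ∧ e.src r = s

def OrphanFree (e : Exec P M) : Prop := ∀ s, e.IsSend s → e.Matched s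

/-- Prefix of executions: the word is a prefix and the source functions agree
on the receive events of the shorter one. -/
def IsPrefix (e₁ e₂ : Exec P M) : Prop :=
  e₁.w <+: e₂.w ∧ ∀ i, e₁.IsRecv i → e₁.src i = e₂.src i

/-- Projection of an execution onto the actions of a process. -/
def proj (e : Exec P M) [DecidableEq P] (p : P) : List (Act P M) :=
  e.w.filter (fun a => decide (a.proc = p))

/-- The MSC event `(process, index within the process)` at a position of the word. -/
def evOf (e : Exec P M) [DecidableEq P] (i : ℕ) : Option (P × ℕ) :=
  (e.act? i).map
    (fun a => (a.proc, ((e.w.take i).filter (fun b => decide (b.proc = a.proc))).length))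

/-- The position in the word of the `i`-th event of process `p`. -/
def posOf (e : Exec P M) [DecidableEq P] (ev : P × ℕ) : ℕ :=
  ((List.range e.w.length).filter
    (fun k => decide ((e.act? k).map Act.proc = some ev.1))).getD ev.2 0

end Exec

/-- Raw MSCs: a word of actions per process, and a source function on events. -/
structure MSC (P M : Type) : Type where
  w : P → List (Act P M)
  src : P × ℕ → P × ℕ

namespace MSC
variable {P M : Type}

def act? (Mm : MSC P M) (ev : P × ℕ) : Option (Act P M) := (Mm.w ev.1)[ev.2]?

def IsSend (Mm : MSC P M) (ev : P × ℕ) : Prop := ∃ p q m, Mm.act? ev = some (.snd p q m)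

def IsRecv (Mm : MSC P M) (ev : P × ℕ) : Prop := ∃ p q m, Mm.act? ev = some (.rcv p q m)

/-- Well-formedness of an MSC. -/
def WF (Mm : MSC P M) : Prop :=
  (∀ p, ∀ a ∈ Mm.w p, a.proc = p) ∧
  (∀ ev p q m, Mm.act? ev = some (.rcv p q m) → Mm.act? (Mm.src ev) = some (.snd p q m)) ∧
  (∀ ev ev', Mm.IsRecv ev → Mm.IsRecv ev' → Mm.src ev = Mm.src ev' → ev = ev')

/-- Basic happens-before steps: process order and message order. -/
inductive hbBase (Mm : MSC P M) : P × ℕ → P × ℕ → Prop where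
  | proc (p : P) (i j : ℕ) : i < j → j < (Mm.w p).length → hbBase Mm (p, i) (p, j)
  | msg (ev : P × ℕ) : Mm.IsRecv ev → hbBase Mm (Mm.src ev) ev

/-- The happens-before relation: least transitive relation containing the basic steps. -/
def hb (Mm : MSC P M) : P × ℕ → P × ℕ → Prop := Relation.TransGen (hbBase Mm)

/-- Prefix of MSCs. -/
def IsPrefix (M₁ M₂ : MSC P M) : Prop :=
  (∀ p, M₁.w p <+: M₂.w p) ∧ ∀ ev, M₁.IsRecv ev → M₁.src ev = M₂.src ev

end MSC

/-- Prefix closure of a set of MSCs. -/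
def prefSet {P M : Type} (X : Set (MSC P M)) : Set (MSC P M) :=
  {Mm | ∃ M' ∈ X, Mm.IsPrefix M'}

/-- The MSC of an execution: project onto each process and lift the source function. -/
def Exec.toMSC {P M : Type} [DecidableEq P] (e : Exec P M) : MSC P M where
  w p := e.w.filter (fun a => decide (a.proc = p))
  src ev := (e.evOf (e.src (e.posOf ev))).getD ev

/-- The linearisations of an MSC, identified with the executions they induce. -/
def lin {P M : Type} [DecidableEq P] (Mm : MSC P M) : Set (Exec P M) :=
  {e | e.WF ∧ e.toMSC = Mm}

/-- The linearisations of an MSC lying in a communication model. -/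
def linC {P M : Type} [DecidableEq P] (Com : Set (Exec P M)) (Mm : MSC P M) :
    Set (Exec P M) :=
  lin Mm ∩ Com

/-- A communication model (a set of executions) is causally closed if whenever an MSC
has a linearisation in the model, all its linearisations are in the model. -/
def CausallyClosed {P M : Type} [DecidableEq P] (Com : Set (Exec P M)) : Prop :=
  ∀ Mm : MSC P M, (linC Com Mm).Nonempty → linC Com Mm = lin Mm

/-- The MSCs linearisable in a communication model. -/
def MSCModel {P M : Type} [DecidableEq P] (Com : Set (Exec P M)) : Set (MSC P M) :=
  {Mm | (linC Com Mm).Nonempty}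

/-- The bag communication model: all executions. -/
def bag {P M : Type} : Set (Exec P M) := {e | e.WF}

/-- The synchronous communication model: every send is immediately followed by
its matching receive. -/
def synch {P M : Type} : Set (Exec P M) :=
  {e | e.WF ∧ ∀ s, e.IsSend s → e.IsRecv (s + 1) ∧ e.src (s + 1) = s}

/-- The peer-to-peer communication model. -/
def p2p {P M : Type} : Set (Exec P M) :=
  {e | e.WF ∧ ∀ s₁ s₂ p q m₁ m₂,
    e.act? s₁ = some (.snd p q m₁) → e.act? s₂ = some (.snd p q m₂) → s₁ < s₂ →
    (¬ e.Matched s₂ ∨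
      ∃ r₁ r₂, r₁ < r₂ ∧ e.IsRecv r₁ ∧ e.IsRecv r₂ ∧ e.src r₁ = s₁ ∧ e.src r₂ = s₂)}

/-- Happens-before between positions of an execution, through its MSC. -/
def Exec.hbM {P M : Type} [DecidableEq P] (e : Exec P M) (i j : ℕ) : Prop :=
  ∃ ev₁ ev₂, e.evOf i = some ev₁ ∧ e.evOf j = some ev₂ ∧ e.toMSC.hb ev₁ ev₂

/-- The causally ordered communication model. -/
def causal {P M : Type} [DecidableEq P] : Set (Exec P M) :=
  {e | e.WF ∧ ∀ s₁ s₂ p₁ p₂ q m₁ m₂,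
    e.act? s₁ = some (.snd p₁ q m₁) → e.act? s₂ = some (.snd p₂ q m₂) → e.hbM s₁ s₂ →
    (¬ e.Matched s₂ ∨
      ∃ r₁ r₂, e.hbM r₁ r₂ ∧ e.IsRecv r₁ ∧ e.IsRecv r₂ ∧ e.src r₁ = s₁ ∧ e.src r₂ = s₂)}

/-- A communicating finite state machine: an NFA with ε-transitions
(over the actions of a process) with finitely many states. -/
structure CFSM (A : Type) : Type 1 where
  State : Type
  fin : Fintype State
  aut : εNFA A State

instance {A : Type} (c : CFSM A) : Fintype c.State := c.fin

/-- The machine obtained by making all states accepting. -/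
def CFSM.up {A : Type} (c : CFSM A) : CFSM A :=
  ⟨c.State, c.fin, { c.aut with accept := Set.univ }⟩

/-- Making all states of all machines of a system accepting. -/
def sysUp {P M : Type} (S : P → CFSM (Act P M)) : P → CFSM (Act P M) :=
  fun p => (S p).up

/-- `Exec(S, Com)`: the executions of a system of CFSMs in a communication model. -/
def ExecSys {P M : Type} [DecidableEq P] (S : P → CFSM (Act P M)) (Com : Set (Exec P M)) :
    Set (Exec P M) :=
  {e | e ∈ Com ∧ ∀ p, e.proj p ∈ (S p).aut.accepts}

/-- `MSC(S, Com)`: the MSCs of the executions of a system of CFSMs. -/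
def MSCSys {P M : Type} [DecidableEq P] (S : P → CFSM (Act P M)) (Com : Set (Exec P M)) :
    Set (MSC P M) :=
  Exec.toMSC '' ExecSys S Com

/-- A system is deadlock-free for `Com` if every execution of the system with all states
accepting is a prefix of an accepting execution of the system. -/
def DeadlockFree {P M : Type} [DecidableEq P] (S : P → CFSM (Act P M))
    (Com : Set (Exec P M)) : Prop :=
  ∀ e ∈ ExecSys (sysUp S) Com, ∃ e' ∈ ExecSys S Com, e.IsPrefix e'

/-- A system is orphan-free for `Com` if all its executions are orphan-free. -/
def SysOrphanFree {P M : Type} [DecidableEq P] (S : P → CFSM (Act P M))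
    (Com : Set (Exec P M)) : Prop :=
  ∀ e ∈ ExecSys S Com, e.OrphanFree

/-- An arrow `p→q:m` with `p ≠ q`. -/
def Arrow (P M : Type) : Type := {x : P × P × M // x.1 ≠ x.2.1}

namespace Arrow
variable {P M : Type}

def sender (a : Arrow P M) : P := a.1.1
def receiver (a : Arrow P M) : P := a.1.2.1
def msg (a : Arrow P M) : M := a.1.2.2
def sendAct (a : Arrow P M) : Act P M := .snd a.sender a.receiver a.msg
def recvAct (a : Arrow P M) : Act P M := .rcv a.sender a.receiver a.msg

/-- Two arrows commute when their pairs of processes are disjoint. -/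
def Commutes (a b : Arrow P M) : Prop :=
  a.sender ≠ b.sender ∧ a.sender ≠ b.receiver ∧
    a.receiver ≠ b.sender ∧ a.receiver ≠ b.receiver

instance [DecidableEq P] [Fintype P] [Fintype M] : Fintype (Arrow P M) :=
  Subtype.fintype _

end Arrow

/-- A global type: a deterministic finite (possibly partial) automaton over arrows. -/
structure GType (P M : Type) : Type 1 where
  State : Type
  fin : Fintype State
  step : State → Arrow P M → Option State
  start : State
  accept : Set State

instance {P M : Type} (G : GType P M) : Fintype G.State := G.fin

namespace GType
variable {P M : Type}

def evalFrom (G : GType P M) (s : Option G.State) (w : List (Arrow P M)) : Option G.State :=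
  w.foldl (fun s a => s.bind (fun q => G.step q a)) s

/-- The word language of a global type. -/
def lang (G : GType P M) : Set (List (Arrow P M)) :=
  {w | ∃ s, G.evalFrom (some G.start) w = some s ∧ s ∈ G.accept}

/-- The arrows labelling the outgoing transitions of a state. -/
def choices (G : GType P M) (s : G.State) : Set (Arrow P M) := {a | (G.step s a).isSome}

/-- Commutation-determinism: no two arrows available at a same state commute. -/
def CommDet (G : GType P M) : Prop :=
  ∀ s : G.State, ∀ a ∈ G.choices s, ∀ b ∈ G.choices s, ¬ a.Commutes b

/-- Sender-driven choice: all arrows available at a same state have the same sender. -/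
def SenderDriven (G : GType P M) : Prop :=
  ∀ s : G.State, ∀ a ∈ G.choices s, ∀ b ∈ G.choices s, a.sender = b.sender

end GType

/-- The synchronous execution coded by a sequence of arrows. -/
def execOfArrows {P M : Type} (w : List (Arrow P M)) : Exec P M where
  w := (w.map (fun a => [a.sendAct, a.recvAct])).flatten
  src := fun i => i - 1

/-- The MSC coded by a sequence of arrows. -/
def mscOfArrows {P M : Type} [DecidableEq P] (w : List (Arrow P M)) : MSC P M :=
  (execOfArrows w).toMSC

/-- The set of MSCs of sequences of arrows (MSCs linearisable in the synchronous model). -/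
def MSCsynch (P M : Type) [DecidableEq P] : Set (MSC P M) :=
  Set.range (mscOfArrows (P := P) (M := M))

/-- The existential MSC language of a global type. -/
def Lexists {P M : Type} [DecidableEq P] (G : GType P M) : Set (MSC P M) :=
  mscOfArrows '' G.lang

/-- The universal MSC language of a global type. -/
def Lforall {P M : Type} [DecidableEq P] (G : GType P M) : Set (MSC P M) :=
  {Mm | (∃ w, mscOfArrows w = Mm) ∧ ∀ w, mscOfArrows w = Mm → w ∈ G.lang}

/-- A global type is commutation-closed when its existential and universal MSC
languages coincide. -/
def GType.CommClosed {P M : Type} [DecidableEq P] (G : GType P M) : Prop :=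
  Lexists G = Lforall G

/-- The relabelling of an arrow for the projection onto process `p`. -/
def projLabel {P M : Type} [DecidableEq P] (p : P) (a : Arrow P M) : Option (Act P M) :=
  if a.sender = p then some a.sendAct
  else if a.receiver = p then some a.recvAct
  else none

/-- The projected system of CFSMs of a global type. -/
def projG {P M : Type} [DecidableEq P] (G : GType P M) : P → CFSM (Act P M) :=
  fun p =>
    ⟨G.State, G.fin,
      { step := fun s oa =>
          {s' | ∃ arr : Arrow P M, G.step s arr = some s' ∧ projLabel p arr = oa},
        start := {G.start},
        accept := G.accept }⟩

/-- `Exec(G, Com)`: the semantics of a global type in a communication model. -/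
def ExecG {P M : Type} [DecidableEq P] (G : GType P M) (Com : Set (Exec P M)) :
    Set (Exec P M) :=
  {e | ∃ Mm ∈ Lexists G, e ∈ linC Com Mm}

/-- Deadlock-free realisability of a global type in a communication model:
(CC) conformance and (DF) deadlock freedom of the projected system. -/
def DFRealisable {P M : Type} [DecidableEq P] (G : GType P M) (Com : Set (Exec P M)) : Prop :=
  ExecSys (projG G) Com = ExecG G Com ∧ DeadlockFree (projG G) Com

/-- The synchronous product of a system of CFSMs: an ε-NFA over arrows. -/
def syncProd {P M : Type} (S : P → CFSM (Act P M)) :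
    εNFA (Arrow P M) (∀ p, (S p).State) where
  step st oa :=
    match oa with
    | some a =>
        {st' | st' a.sender ∈ (S a.sender).aut.step (st a.sender) (some a.sendAct) ∧
               st' a.receiver ∈ (S a.receiver).aut.step (st a.receiver) (some a.recvAct) ∧
               ∀ r, r ≠ a.sender → r ≠ a.receiver → st' r = st r}
    | none =>
        {st' | ∃ p, st' p ∈ (S p).aut.step (st p) none ∧ ∀ r, r ≠ p → st' r = st r}
  start := {st | ∀ p, st p ∈ (S p).aut.start}
  accept := {st | ∀ p, st p ∈ (S p).aut.accept}

/-- `prod(S)`: the powerset determinisation of the synchronous product, a global type. -/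
noncomputable def prodG {P M : Type} [Fintype P] (S : P → CFSM (Act P M)) : GType P M :=
  let A := (syncProd S).toNFA.toDFA
  { State := Set (∀ p, (S p).State)
    fin := by
      haveI : Finite (∀ p, (S p).State) := inferInstance
      exact Fintype.ofFinite _
    step := fun s a => some (A.step s a)
    start := A.start
    accept := A.accept }

/-- The product `G₁ ⊗ G₂` of two global types (language intersection). -/
def prodGT {P M : Type} (G₁ G₂ : GType P M) : GType P M where
  State := G₁.State × G₂.State
  fin := inferInstance
  step s a := (G₁.step s.1 a).bind fun q₁ => (G₂.step s.2 a).map fun q₂ => (q₁, q₂)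
  start := (G₁.start, G₂.start)
  accept := {s | s.1 ∈ G₁.accept ∧ s.2 ∈ G₂.accept}

/-- The dual of a global type: complete it and swap accepting and non-accepting states. -/
def dualG {P M : Type} (G : GType P M) : GType P M where
  State := Option G.State
  fin := inferInstance
  step s a := some (s.bind fun q => G.step q a)
  start := some G.start
  accept := {s | ∀ q, s = some q → q ∉ G.accept}

/-- RSC executions: every receive immediately follows its source send. -/
def RSCexec {P M : Type} : Set (Exec P M) :=
  {e | e.WF ∧ ∀ r, e.IsRecv r → e.src r = r - 1}

/-- The MSCs admitting an RSC linearisation. -/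
def MSCrsc {P M : Type} [DecidableEq P] : Set (MSC P M) :=
  {Mm | ∃ e ∈ RSCexec (P := P) (M := M), e.toMSC = Mm}

/-- A set of MSCs is RegSC if some NFA over actions accepts exactly the RSC executions
whose MSC belongs to the set. -/
def RegSCset {P M : Type} [DecidableEq P] (X : Set (MSC P M)) : Prop :=
  ∃ (σ : Type) (_ : Fintype σ) (A : NFA (Act P M) σ),
    ∀ w : List (Act P M),
      w ∈ A.accepts ↔ ∃ e ∈ RSCexec (P := P) (M := M), e.w = w ∧ e.toMSC ∈ X

/-- A communication model is RegSC if the set of its RSC-linearisable MSCs is RegSC. -/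
def RegSCmodel {P M : Type} [DecidableEq P] (Com : Set (Exec P M)) : Prop :=
  RegSCset (MSCModel Com ∩ MSCrsc)

/-! Both conditions only compare events of a single process: the two sends belong to `p`, and by
well-formedness their matching receives belong to `q`. For two events of one process,
happens-before coincides with the order of their positions in the word: process order is
preserved by the positions, every message edge goes from a send to a later receive, so `≺_M` is
contained in the order of positions. -/

namespace List
variable {α β : Type*} [DecidableEq β]

def fiberIndices (l : List α) (f : α → β) (b : β) : List ℕ :=
  (List.range l.length).filter (fun k => decide ((l[k]?).map f = some b))

def fiberRank (l : List α) (f : α → β) (b : β) (k : ℕ) : ℕ :=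
  ((l.take k).filter (fun a => decide (f a = b))).length

theorem fiberIndices_cons (a : α) (l : List α) (f : α → β) (b : β) :
    (a :: l).fiberIndices f b =
      (if f a = b then [0] else []) ++ (l.fiberIndices f b).map (· + 1) := by
  rw [fiberIndices, length_cons, range_succ_eq_map, filter_cons, filter_map]
  by_cases h : f a = b <;> simp [h, fiberIndices, Function.comp_def]

theorem fiberRank_cons_succ (a : α) (l : List α) (f : α → β) (b : β) (k : ℕ) :
    (a :: l).fiberRank f b (k + 1) = (if f a = b then 1 else 0) + l.fiberRank f b k := by
  by_cases h : f a = b <;> simp [fiberRank, h, Nat.add_comm]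

theorem fiberRank_mono (l : List α) (f : α → β) (b : β) : Monotone (l.fiberRank f b) :=
  fun _ _ hij => ((take_prefix_take_left hij).filter _).length_le

theorem fiberRank_lt_fiberRank {l : List α} {f : α → β} {b : β} {i j : ℕ} {a : α}
    (ha : l[i]? = some a) (hab : f a = b) (hij : i < j) :
    l.fiberRank f b i < l.fiberRank f b j :=
  calc l.fiberRank f b i < l.fiberRank f b (i + 1) := by
        simp [fiberRank, take_add_one, ha, hab]
    _ ≤ l.fiberRank f b j := l.fiberRank_mono f b hij

theorem fiberRank_lt_length_filter {l : List α} {f : α → β} {b : β} {i : ℕ} {a : α}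
    (ha : l[i]? = some a) (hab : f a = b) :
    l.fiberRank f b i < (l.filter (fun a => decide (f a = b))).length := by
  simpa [fiberRank] using
    fiberRank_lt_fiberRank ha hab (getElem?_eq_some_iff.mp ha).1

theorem getElem?_fiberIndices_fiberRank {l : List α} {f : α → β} {b : β} {k : ℕ} {a : α}
    (ha : l[k]? = some a) (hab : f a = b) :
    (l.fiberIndices f b)[l.fiberRank f b k]? = some k := by
  induction l generalizing k with
  | nil => simp at ha
  | cons c l ih =>
    rw [fiberIndices_cons]
    cases k with
    | zero => cases ha; simp [fiberRank, hab]
    | succ k =>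
      rw [fiberRank_cons_succ]
      by_cases hc : f c = b <;> simp [hc, ih ha, Nat.add_comm]

theorem exists_fiberRank_eq_of_getElem?_filter {l : List α} {f : α → β} {b : β} {n : ℕ}
    {a : α} (ha : (l.filter (fun a => decide (f a = b)))[n]? = some a) :
    ∃ k, l[k]? = some a ∧ l.fiberRank f b k = n := by
  induction l generalizing n with
  | nil => simp at ha
  | cons c l ih =>
    by_cases hc : f c = b
    · cases n with
      | zero => exact ⟨0, by simpa [filter_cons, hc] using ha, rfl⟩
      | succ n =>
        obtain ⟨k, hk, rfl⟩ := ih (by simpa [filter_cons, hc] using ha)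
        exact ⟨k + 1, hk, by simp [fiberRank_cons_succ, hc, Nat.add_comm]⟩
    · obtain ⟨k, hk, rfl⟩ := ih (by simpa [filter_cons, hc] using ha)
      exact ⟨k + 1, hk, by simp [fiberRank_cons_succ, hc]⟩

end List

namespace Exec
variable {P M : Type} {e : Exec P M}

theorem WF.act?_eq_rcv_of_src_eq (he : e.WF) {r s : ℕ} {p q : P} {m : M} (hr : e.IsRecv r)
    (hs : e.act? s = some (.snd p q m)) (hrs : e.src r = s) : e.act? r = some (.rcv p q m) := by
  obtain ⟨p', q', m', hr⟩ := hr
  have hsnd := (he.1 r p' q' m' hr).2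
  rw [hrs, hs, Option.some_inj, Act.snd.injEq] at hsnd
  obtain ⟨rfl, rfl, rfl⟩ := hsnd
  exact hr

variable [DecidableEq P]

theorem posOf_eq (ev : P × ℕ) : e.posOf ev = (e.w.fiberIndices Act.proc ev.1).getD ev.2 0 :=
  rfl

theorem evOf_eq_some {i : ℕ} {a : Act P M} (ha : e.act? i = some a) :
    e.evOf i = some (a.proc, e.w.fiberRank Act.proc a.proc i) := by
  simp only [evOf, ha]; rfl

theorem posOf_fiberRank {i : ℕ} {a : Act P M} {p : P} (ha : e.act? i = some a)
    (hp : a.proc = p) : e.posOf (p, e.w.fiberRank Act.proc p i) = i := by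
  rw [posOf_eq, List.getD_eq_getElem?_getD, List.getElem?_fiberIndices_fiberRank ha hp]; rfl

theorem act?_posOf_of_toMSC_act? {ev : P × ℕ} {a : Act P M}
    (ha : e.toMSC.act? ev = some a) :
    e.act? (e.posOf ev) = some a ∧ e.w.fiberRank Act.proc ev.1 (e.posOf ev) = ev.2 := by
  obtain ⟨p, n⟩ := ev
  obtain ⟨k, hk, hrank⟩ := List.exists_fiberRank_eq_of_getElem?_filter ha
  change e.w.fiberRank Act.proc p k = n at hrank
  subst hrank
  have hp : a.proc = p := of_decide_eq_true (List.mem_filter.mp (List.mem_of_getElem? ha)).2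
  rw [posOf_fiberRank hk hp]
  exact ⟨hk, rfl⟩

theorem posOf_lt_of_hbBase (he : e.WF) {ev ev' : P × ℕ} (h : e.toMSC.hbBase ev ev') :
    e.posOf ev < e.posOf ev' := by
  cases h with
  | proc p i j hij hj =>
    have hi : i < (e.toMSC.w p).length := hij.trans hj
    have hrank_i := (act?_posOf_of_toMSC_act? (ev := (p, i)) (List.getElem?_eq_getElem hi)).2
    have hrank_j := (act?_posOf_of_toMSC_act? (ev := (p, j)) (List.getElem?_eq_getElem hj)).2
    exact (e.w.fiberRank_mono Act.proc p).reflect_lt (by rwa [hrank_i, hrank_j])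
  | msg ev' hrecv =>
    obtain ⟨p, q, m, hrcv⟩ := hrecv
    obtain ⟨hlt, hsnd⟩ := he.1 _ p q m (act?_posOf_of_toMSC_act? hrcv).1
    have hsrc : e.toMSC.src ev' = (p, e.w.fiberRank Act.proc p (e.src (e.posOf ev'))) := by
      simp only [toMSC, evOf_eq_some hsnd]; rfl
    rwa [hsrc, posOf_fiberRank (p := p) hsnd rfl]

theorem posOf_lt_of_hb (he : e.WF) {ev ev' : P × ℕ} (h : e.toMSC.hb ev ev') :
    e.posOf ev < e.posOf ev' := by
  induction h with
  | single h => exact posOf_lt_of_hbBase he h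
  | tail _ h ih => exact ih.trans (posOf_lt_of_hbBase he h)

theorem posOf_of_evOf_eq_some {i : ℕ} {ev : P × ℕ} (h : e.evOf i = some ev) :
    e.posOf ev = i := by
  obtain ⟨a, ha, rfl⟩ := Option.map_eq_some_iff.mp h
  exact posOf_fiberRank ha rfl

theorem hbM_iff_lt (he : e.WF) {i j : ℕ} {a b : Act P M} (ha : e.act? i = some a)
    (hb : e.act? j = some b) (hab : a.proc = b.proc) : e.hbM i j ↔ i < j := by
  constructor
  · rintro ⟨ev, ev', hev, hev', hhb⟩
    simpa only [posOf_of_evOf_eq_some hev, posOf_of_evOf_eq_some hev'] using posOf_lt_of_hb he hhb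
  · intro hij
    have hstep : e.toMSC.hbBase (b.proc, e.w.fiberRank Act.proc b.proc i)
        (b.proc, e.w.fiberRank Act.proc b.proc j) :=
      .proc _ _ _ (List.fiberRank_lt_fiberRank ha hab hij) (List.fiberRank_lt_length_filter hb rfl)
    exact ⟨_, _, hab ▸ evOf_eq_some ha, evOf_eq_some hb, .single hstep⟩

end Exec

theorem stmt0_general (P Mg : Type) [DecidableEq P]
    (e : Exec P Mg) (he : e.WF) :
    e ∈ p2p ↔
      (∀ s₁ s₂ p q m₁ m₂,
        e.act? s₁ = some (.snd p q m₁) → e.act? s₂ = some (.snd p q m₂) → e.hbM s₁ s₂ →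
        (¬ e.Matched s₂ ∨
          ∃ r₁ r₂, e.hbM r₁ r₂ ∧ e.IsRecv r₁ ∧ e.IsRecv r₂ ∧
            e.src r₁ = s₁ ∧ e.src r₂ = s₂)) := by
  simp only [p2p, Set.mem_ofPred_eq, he, true_and]
  refine forall₄_congr fun s₁ s₂ p q => forall₄_congr fun m₁ m₂ h₁ h₂ => ?_
  rw [Exec.hbM_iff_lt he h₁ h₂ rfl]
  refine imp_congr_right fun _ => or_congr_right (exists₂_congr fun r₁ r₂ => ?_)
  refine and_congr_left fun ⟨hr₁, hr₂, hs₁, hs₂⟩ => ?_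
  exact (Exec.hbM_iff_lt he (he.act?_eq_rcv_of_src_eq hr₁ h₁ hs₁)
    (he.act?_eq_rcv_of_src_eq hr₂ h₂ hs₂) rfl).symm

/-- an execution `e` is in `p2p` iff for any two send events `s₁, s₂` of `e`
both labelled with a send from `p` to `q` such that `s₁ ≺_M s₂` (with `M = msc(e)`),
either `s₂` is unmatched, or there are receive events `r₁ ≺_M r₂` with
`src r₁ = s₁` and `src r₂ = s₂`. -/
theorem stmt0 (P Mg : Type) [Fintype P] [DecidableEq P] [Fintype Mg] [DecidableEq Mg]
    (e : Exec P Mg) (he : e.WF) :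
    e ∈ p2p ↔
      (∀ s₁ s₂ p q m₁ m₂,
        e.act? s₁ = some (.snd p q m₁) → e.act? s₂ = some (.snd p q m₂) → e.hbM s₁ s₂ →
        (¬ e.Matched s₂ ∨
          ∃ r₁ r₂, e.hbM r₁ r₂ ∧ e.IsRecv r₁ ∧ e.IsRecv r₂ ∧
            e.src r₁ = s₁ ∧ e.src r₂ = s₂)) :=
  stmt0_general P Mg e he
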